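/- A form p ∈ ℂ[x₁,…,xₙ] of degree 3r can be written as p = f₁³ + f₂³ with f₁, f₂ non-proportional forms of degree r if and only if p = g₁g₂g₃ where g₁, g₂, g₃ are pairwise non-proportional forms of degree r that are linearly dependent over ℂ. -/

import Mathlib

/-!
For a primitive cube root of unity `ω`, `f₁³ + f₂³ = (f₁ + f₂)(f₁ + ω f₂)(f₁ + ω² f₂)`, and the
three factors lie in the pencil spanned by `f₁, f₂`, pairwise independent and killed by
`(1, ω, ω²)`.
Conversely a linear relation among pairwise independent `g₁, g₂, g₃` has all coefficients nonzero,
so `g₃ = α g₁ + β g₂` with `αβ ≠ 0`; an invertible change of basis of the pencil, scaled by a cube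
root of `1 / (3 (ω - ω²) α β)`, turns `g₁ g₂ g₃` into a sum of two cubes.
-/

/-- Two forms are non-proportional if neither is a scalar multiple of the other. -/
def NonProp {n : ℕ} (f g : MvPolynomial (Fin n) ℂ) : Prop :=
  (∀ c : ℂ, g ≠ c • f) ∧ (∀ c : ℂ, f ≠ c • g)

section Module

variable {K V : Type*} [Field K] [AddCommGroup V] [Module K V]

theorem linearIndependent_pair_iff_forall_ne_smul {x y : V} :
    LinearIndependent K ![x, y] ↔ (∀ c : K, y ≠ c • x) ∧ ∀ c : K, x ≠ c • y := by
  refine ⟨fun h ↦ ⟨fun c hc ↦ ?_, fun c hc ↦ ?_⟩, fun ⟨hy, hx⟩ ↦ ?_⟩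
  · exact (LinearIndependent.pair_iff' (h.ne_zero 0)).mp h c hc.symm
  · rw [LinearIndependent.pair_symm_iff] at h
    exact (LinearIndependent.pair_iff' (h.ne_zero 0)).mp h c hc.symm
  · have hx₀ : x ≠ 0 := fun h₀ ↦ hx 0 (by simp [h₀])
    exact (LinearIndependent.pair_iff' hx₀).mpr fun c hc ↦ hy c hc.symm

theorem LinearIndependent.pair_add_smul {x y : V} (h : LinearIndependent K ![x, y]) {a b : K}
    (hab : a ≠ b) : LinearIndependent K ![x + a • y, x + b • y] := by
  simpa [h, hab.symm] using
    LinearIndependent.pair_add_smul_add_smul_iff (R := K) (S := K) (x := x) (y := y) 1 a 1 b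

theorem exists_eq_smul_add_smul_of_linearIndependent {g₁ g₂ g₃ : V}
    (h₁₂ : LinearIndependent K ![g₁, g₂]) (h₁₃ : LinearIndependent K ![g₁, g₃])
    (h₂₃ : LinearIndependent K ![g₂, g₃]) {c₁ c₂ c₃ : K} (hc : (c₁, c₂, c₃) ≠ (0, 0, 0))
    (hsum : c₁ • g₁ + c₂ • g₂ + c₃ • g₃ = 0) :
    ∃ α β : K, α ≠ 0 ∧ β ≠ 0 ∧ g₃ = α • g₁ + β • g₂ := by
  have hc₃ : c₃ ≠ 0 := by
    rintro rfl
    obtain ⟨rfl, rfl⟩ := LinearIndependent.pair_iff.mp h₁₂ c₁ c₂ (by simpa using hsum)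
    exact hc rfl
  have hg₃ : g₃ = (-c₁ / c₃) • g₁ + (-c₂ / c₃) • g₂ := by
    apply smul_right_injective V hc₃
    simp only [smul_add, smul_smul, mul_div_cancel₀ _ hc₃]
    linear_combination (norm := module) hsum
  refine ⟨-c₁ / c₃, -c₂ / c₃, fun hα ↦ ?_, fun hβ ↦ ?_, hg₃⟩
  · have := LinearIndependent.pair_iff.mp h₂₃ (-c₂ / c₃) (-1) (by rw [hg₃, hα]; module)
    exact one_ne_zero (neg_eq_zero.mp this.2)
  · have := LinearIndependent.pair_iff.mp h₁₃ (-c₁ / c₃) (-1) (by rw [hg₃, hβ]; module)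
    exact one_ne_zero (neg_eq_zero.mp this.2)

end Module

theorem IsPrimitiveRoot.sq_add_self_add_one_eq_zero {K : Type*} [Field K] {ω : K}
    (hω : IsPrimitiveRoot ω 3) : ω ^ 2 + ω + 1 = 0 := by
  have h := hω.geom_sum_eq_zero (by norm_num)
  simp only [Finset.sum_range_succ, Finset.sum_range_zero] at h
  linear_combination h

section Algebra

variable {K A : Type*} [Field K] [CommRing A] [Algebra K A]

theorem sum_cubes_eq_mul_mul {ω : K} (hω : ω ^ 2 + ω + 1 = 0) (f₁ f₂ : A) :
    f₁ ^ 3 + f₂ ^ 3 = (f₁ + f₂) * (f₁ + ω • f₂) * (f₁ + ω ^ 2 • f₂) := by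
  have hω' : algebraMap K A ω ^ 2 + algebraMap K A ω + 1 = 0 := by
    simpa using congrArg (algebraMap K A) hω
  simp only [Algebra.smul_def, map_pow]
  linear_combination (-(f₁ ^ 2 * f₂) - algebraMap K A ω * f₁ * f₂ ^ 2
    - (algebraMap K A ω - 1) * f₂ ^ 3) * hω'

/- With `u = α g₁` and `v = β g₂`, `(ω u - v)³ + (-u + ω v)³ = 3 (ω - ω²) u v (u + v)`
as soon as `ω³ = 1`. -/
theorem mul_mul_smul_add_smul_eq_sum_cubes {ω a α β : K} (hω : ω ^ 3 = 1)
    (ha : a ^ 3 * (3 * (ω - ω ^ 2) * α * β) = 1) (g₁ g₂ : A) :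
    g₁ * g₂ * (α • g₁ + β • g₂)
      = ((a * ω * α) • g₁ + (-a * β) • g₂) ^ 3 + ((-a * α) • g₁ + (a * ω * β) • g₂) ^ 3 := by
  have hω' := congrArg (algebraMap K A) hω
  have ha' := congrArg (algebraMap K A) ha
  simp only [map_pow, map_mul, map_sub, map_one, map_ofNat] at hω' ha'
  simp only [Algebra.smul_def, map_mul, map_neg]
  linear_combination (-(g₁ * g₂ * (algebraMap K A α * g₁ + algebraMap K A β * g₂))) * ha'
    - algebraMap K A a ^ 3 * ((algebraMap K A α * g₁) ^ 3 + (algebraMap K A β * g₂) ^ 3) * hω'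

theorem exists_linearIndependent_sum_cubes_eq_mul_mul [IsAlgClosed K] {ω : K}
    (hω : IsPrimitiveRoot ω 3) {g₁ g₂ : A} (hg : LinearIndependent K ![g₁, g₂]) {α β : K}
    (hα : α ≠ 0) (hβ : β ≠ 0) :
    ∃ a b c d : K, LinearIndependent K ![a • g₁ + b • g₂, c • g₁ + d • g₂] ∧
      g₁ * g₂ * (α • g₁ + β • g₂) = (a • g₁ + b • g₂) ^ 3 + (c • g₁ + d • g₂) ^ 3 := by
  have h₃ : (3 : K) ≠ 0 := by
    have := hω.neZero'
    exact_mod_cast NeZero.ne ((3 : ℕ) : K)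
  have hω₀ : ω ≠ 0 := hω.ne_zero (by norm_num)
  have hω₁ : ω ≠ 1 := hω.ne_one (by norm_num)
  have hω₂ : ω ^ 2 ≠ 1 := hω.pow_ne_one_of_pos_of_lt (by norm_num) (by norm_num)
  have hden : 3 * (ω - ω ^ 2) * α * β ≠ 0 := by
    rw [show ω - ω ^ 2 = ω * (1 - ω) by ring]
    exact mul_ne_zero (mul_ne_zero (mul_ne_zero h₃
      (mul_ne_zero hω₀ (sub_ne_zero.mpr hω₁.symm))) hα) hβ
  obtain ⟨a, ha⟩ := IsAlgClosed.exists_pow_nat_eq (3 * (ω - ω ^ 2) * α * β)⁻¹ three_pos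
  have ha' : a ^ 3 * (3 * (ω - ω ^ 2) * α * β) = 1 := by rw [ha, inv_mul_cancel₀ hden]
  have ha₀ : a ≠ 0 := by rintro rfl; simp at ha'
  refine ⟨a * ω * α, -a * β, -a * α, a * ω * β, ?_,
    mul_mul_smul_add_smul_eq_sum_cubes hω.pow_eq_one ha' g₁ g₂⟩
  refine (LinearIndependent.pair_add_smul_add_smul_iff (S := K) _ _ _ _).mpr ⟨hg, fun h ↦ ?_⟩
  have : a ^ 2 * α * β * (ω ^ 2 - 1) = 0 := by linear_combination h
  simp [ha₀, hα, hβ, sub_eq_zero, hω₂] at this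

end Algebra

open MvPolynomial

theorem nonProp_iff_linearIndependent {n : ℕ} {f g : MvPolynomial (Fin n) ℂ} :
    NonProp f g ↔ LinearIndependent ℂ ![f, g] :=
  linearIndependent_pair_iff_forall_ne_smul.symm

theorem stmt_17_general {n : ℕ} (r : ℕ) (p : MvPolynomial (Fin n) ℂ) :
    (∃ f₁ f₂ : MvPolynomial (Fin n) ℂ,
        f₁.IsHomogeneous r ∧ f₂.IsHomogeneous r ∧ NonProp f₁ f₂ ∧
        p = f₁^3 + f₂^3)
    ↔ (∃ g₁ g₂ g₃ : MvPolynomial (Fin n) ℂ,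
        g₁.IsHomogeneous r ∧ g₂.IsHomogeneous r ∧ g₃.IsHomogeneous r ∧
        NonProp g₁ g₂ ∧ NonProp g₁ g₃ ∧ NonProp g₂ g₃ ∧
        (∃ c₁ c₂ c₃ : ℂ, (c₁, c₂, c₃) ≠ (0, 0, 0) ∧
          c₁ • g₁ + c₂ • g₂ + c₃ • g₃ = 0) ∧
        p = g₁ * g₂ * g₃) := by
  obtain ⟨ω, hω⟩ : ∃ ω : ℂ, IsPrimitiveRoot ω 3 :=
    ⟨_, Complex.isPrimitiveRoot_exp 3 three_ne_zero⟩
  simp only [nonProp_iff_linearIndependent, ← mem_homogeneousSubmodule]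
  set M := homogeneousSubmodule (Fin n) ℂ r
  constructor
  · rintro ⟨f₁, f₂, hf₁, hf₂, hf, rfl⟩
    have hmem (c : ℂ) : f₁ + c • f₂ ∈ M := M.add_mem hf₁ (M.smul_mem c hf₂)
    have hω₃ := hω.sq_add_self_add_one_eq_zero
    have hω₀₁ : (1 : ℂ) ≠ ω := (hω.ne_one (by norm_num)).symm
    have hω₀₂ : (1 : ℂ) ≠ ω ^ 2 := (hω.pow_ne_one_of_pos_of_lt two_ne_zero (by norm_num)).symm
    have hω₁₂ : ω ≠ ω ^ 2 := by
      simpa using (hω.pow_inj (i := 1) (j := 2) (by norm_num) (by norm_num)).mt (by norm_num)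
    refine ⟨f₁ + f₂, f₁ + ω • f₂, f₁ + ω ^ 2 • f₂, by simpa using hmem 1, hmem ω, hmem _,
      by simpa using hf.pair_add_smul hω₀₁, by simpa using hf.pair_add_smul hω₀₂,
      hf.pair_add_smul hω₁₂, ⟨1, ω, ω ^ 2, by simp, ?_⟩, sum_cubes_eq_mul_mul hω₃ f₁ f₂⟩
    linear_combination (norm := module) hω₃ • (f₁ + (ω ^ 2 - ω + 1) • f₂)
  · rintro ⟨g₁, g₂, g₃, hg₁, hg₂, -, h₁₂, h₁₃, h₂₃, ⟨c₁, c₂, c₃, hc, hsum⟩, rfl⟩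
    obtain ⟨α, β, hα, hβ, rfl⟩ := exists_eq_smul_add_smul_of_linearIndependent h₁₂ h₁₃ h₂₃ hc hsum
    obtain ⟨a, b, c, d, hf, hp⟩ := exists_linearIndependent_sum_cubes_eq_mul_mul hω h₁₂ hα hβ
    exact ⟨_, _, M.add_mem (M.smul_mem a hg₁) (M.smul_mem b hg₂),
      M.add_mem (M.smul_mem c hg₁) (M.smul_mem d hg₂), hf, hp⟩

theorem stmt_17 {n : ℕ} (r : ℕ) (p : MvPolynomial (Fin n) ℂ)
    (hp : p.IsHomogeneous (3 * r)) :
    (∃ f₁ f₂ : MvPolynomial (Fin n) ℂ,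
        f₁.IsHomogeneous r ∧ f₂.IsHomogeneous r ∧ NonProp f₁ f₂ ∧
        p = f₁^3 + f₂^3)
    ↔ (∃ g₁ g₂ g₃ : MvPolynomial (Fin n) ℂ,
        g₁.IsHomogeneous r ∧ g₂.IsHomogeneous r ∧ g₃.IsHomogeneous r ∧
        NonProp g₁ g₂ ∧ NonProp g₁ g₃ ∧ NonProp g₂ g₃ ∧
        (∃ c₁ c₂ c₃ : ℂ, (c₁, c₂, c₃) ≠ (0, 0, 0) ∧
          c₁ • g₁ + c₂ • g₂ + c₃ • g₃ = 0) ∧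
        p = g₁ * g₂ * g₃) :=
  stmt_17_general r p
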